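/- An open Euclidean disk that is tangent to the unit circle from inside, or that intersects the unit disk but is not contained in it, contains hyperbolic disks (with respect to the Poincaré disk metric) of every radius r > 0. -/

import Mathlib

noncomputable def distH (u v : EuclideanSpace ℝ (Fin 2)) : ℝ :=
  2 * Real.arsinh (‖u - v‖ / Real.sqrt ((1 - ‖u‖ ^ 2) * (1 - ‖v‖ ^ 2)))

/-- The open hyperbolic disk with centre `u` and radius `r` in the Poincaré disk model. -/
def ballH (u : EuclideanSpace ℝ (Fin 2)) (r : ℝ) : Set (EuclideanSpace ℝ (Fin 2)) :=
  {v | ‖v‖ < 1 ∧ distH u v < r}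

/-!
The Euclidean disk of radius `s` internally tangent to the unit circle at `p` is the horodisk
`{v | (1 - s) ‖v - p‖² < s (1 - ‖v‖²)}`. Every point `v` of the hyperbolic disk of radius `r`
centred at `(1 - a) p` satisfies `‖v - p‖² < (8 sinh² (r / 2) + 4) a (1 - ‖v‖²)` (triangle
inequality through the centre, together with `a ≤ ‖(1 - a) p - v‖ + (1 - ‖v‖²)`), so that disk
lies in the horodisk once `a` is small. A disk tangent from inside is such a horodisk (its centre must
lie on the radius through the point of contact), and a disk crossing the unit circle contains
a small horodisk at a crossing point.
-/

open Metric Real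

section NormedSpace

variable {E : Type*} [NormedAddCommGroup E] [NormedSpace ℝ E]

lemma norm_smul_of_norm_eq_one {p : E} (hp : ‖p‖ = 1) {t : ℝ} (ht : 0 ≤ t) : ‖t • p‖ = t := by
  rw [norm_smul, hp, mul_one, Real.norm_of_nonneg ht]

lemma exists_norm_eq_one_mem_ball {c : E} {ρ : ℝ} (hin : (ball c ρ ∩ ball 0 1).Nonempty)
    (hout : ¬ ball c ρ ⊆ closedBall 0 1) : ∃ p ∈ ball c ρ, ‖p‖ = 1 := by
  obtain ⟨w, hwc, hw⟩ := hin
  obtain ⟨q, hqc, hq⟩ := Set.not_subset.1 hout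
  rw [mem_ball_zero_iff] at hw
  rw [mem_closedBall_zero_iff, not_le] at hq
  exact (convex_ball c ρ).isPreconnected.intermediate_value hwc hqc continuous_norm.continuousOn
    ⟨hw.le, hq.le⟩

lemma exists_ball_smul_subset_ball {c p : E} {ρ : ℝ} (hp : ‖p‖ = 1) (hpc : p ∈ ball c ρ) :
    ∃ s > 0, ball ((1 - s) • p) s ⊆ ball c ρ := by
  set s := (ρ - dist p c) / 2 with hs_def
  have hs : 0 < s := by rw [mem_ball] at hpc; linarith
  refine ⟨s, hs, ball_subset_ball' ?_⟩
  have hsp : dist ((1 - s) • p) p = s := by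
    rw [dist_eq_norm, show (1 - s) • p - p = -(s • p) by module, norm_neg,
      norm_smul_of_norm_eq_one hp hs.le]
  linarith [dist_triangle ((1 - s) • p) p c]

end NormedSpace

section InnerProductSpace

variable {E : Type*} [NormedAddCommGroup E] [InnerProductSpace ℝ E]

lemma mem_ball_smul_iff {p v : E} (hp : ‖p‖ = 1) {ρ : ℝ} (hρ : 0 ≤ ρ) :
    v ∈ ball ((1 - ρ) • p) ρ ↔ (1 - ρ) * ‖v - p‖ ^ 2 < ρ * (1 - ‖v‖ ^ 2) := by
  have hsq : ‖v - (1 - ρ) • p‖ ^ 2 - ρ ^ 2 = (1 - ρ) * ‖v - p‖ ^ 2 - ρ * (1 - ‖v‖ ^ 2) := by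
    rw [norm_sub_sq_real, norm_sub_sq_real, inner_smul_right, norm_smul, hp, Real.norm_eq_abs,
      mul_one, sq_abs]
    ring
  rw [mem_ball, dist_eq_norm, ← sq_lt_sq₀ (norm_nonneg _) hρ, ← sub_neg, hsq, sub_neg]

lemma eq_smul_of_closedBall_subset_closedBall {c p : E} {ρ : ℝ} (hρ : 0 ≤ ρ) (hp : ‖p‖ = 1)
    (hpc : dist p c = ρ) (hsub : closedBall c ρ ⊆ closedBall 0 1) : c = (1 - ρ) • p := by
  have hfar : ‖c + ρ • p‖ ≤ 1 := by
    have : c + ρ • p ∈ closedBall c ρ := by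
      rw [mem_closedBall, dist_eq_norm, add_sub_cancel_left, norm_smul_of_norm_eq_one hp hρ]
    simpa using hsub this
  have hfar_sq : ‖c‖ ^ 2 + 2 * ρ * inner ℝ c p + ρ ^ 2 ≤ 1 := by
    have := pow_le_one₀ (norm_nonneg _) hfar (n := 2)
    rw [norm_add_sq_real, inner_smul_right, norm_smul_of_norm_eq_one hp hρ] at this
    linarith
  have hpc_sq : 1 - 2 * inner ℝ c p + ‖c‖ ^ 2 = ρ ^ 2 := by
    rw [← hpc, dist_eq_norm, norm_sub_sq_real, hp, real_inner_comm]
    ring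
  have hinner : inner ℝ c p ≤ 1 - ρ := by nlinarith
  -- by `hpc_sq`, `‖c - (1 - ρ) • p‖ ^ 2 = 2 * ρ * (inner ℝ c p - (1 - ρ))`
  have hdist : ‖c - (1 - ρ) • p‖ ^ 2 ≤ 0 := by
    rw [norm_sub_sq_real, inner_smul_right, norm_smul, hp, Real.norm_eq_abs, mul_one, sq_abs]
    nlinarith
  rw [← sub_eq_zero, ← norm_eq_zero]
  exact pow_eq_zero_iff two_ne_zero |>.1 (le_antisymm hdist (sq_nonneg _))

lemma eq_smul_of_ball_subset_ball {c p : E} {ρ : ℝ} (hρ : 0 < ρ) (hp : ‖p‖ = 1)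
    (hpc : p ∈ closure (ball c ρ)) (hsub : ball c ρ ⊆ ball 0 1) : c = (1 - ρ) • p := by
  rw [closure_ball c hρ.ne'] at hpc
  have hp_notMem : p ∉ ball c ρ := fun h ↦ by simpa [hp] using hsub h
  refine eq_smul_of_closedBall_subset_closedBall hρ.le hp
    (le_antisymm hpc (not_lt.1 hp_notMem)) ?_
  rw [← closure_ball c hρ.ne', ← closure_ball (0 : E) one_ne_zero]
  exact closure_mono hsub

end InnerProductSpace

lemma sq_norm_sub_lt_of_distH_lt {u v : EuclideanSpace ℝ (Fin 2)} {r : ℝ} (hu : ‖u‖ < 1)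
    (hv : ‖v‖ < 1) (h : distH u v < r) :
    ‖u - v‖ ^ 2 < sinh (r / 2) ^ 2 * ((1 - ‖u‖ ^ 2) * (1 - ‖v‖ ^ 2)) := by
  have hpos : 0 < (1 - ‖u‖ ^ 2) * (1 - ‖v‖ ^ 2) := by
    have := norm_nonneg u; have := norm_nonneg v
    apply mul_pos <;> nlinarith
  have hlt : ‖u - v‖ / √((1 - ‖u‖ ^ 2) * (1 - ‖v‖ ^ 2)) < sinh (r / 2) := by
    rw [← arsinh_lt_arsinh, arsinh_sinh]
    unfold distH at h
    linarith
  rw [div_lt_iff₀ (sqrt_pos.2 hpos)] at hlt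
  calc ‖u - v‖ ^ 2 < (sinh (r / 2) * √((1 - ‖u‖ ^ 2) * (1 - ‖v‖ ^ 2))) ^ 2 :=
        pow_lt_pow_left₀ hlt (norm_nonneg _) two_ne_zero
    _ = _ := by rw [mul_pow, sq_sqrt hpos.le]

lemma sq_norm_sub_lt_of_mem_ballH {p v : EuclideanSpace ℝ (Fin 2)} (hp : ‖p‖ = 1) {a r : ℝ}
    (ha : 0 < a) (ha1 : a ≤ 1) (hv : v ∈ ballH ((1 - a) • p) r) :
    ‖v - p‖ ^ 2 < (8 * sinh (r / 2) ^ 2 + 4) * a * (1 - ‖v‖ ^ 2) := by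
  obtain ⟨hv1, hvr⟩ := hv
  set u := (1 - a) • p
  set x := ‖u - v‖
  set B := 1 - ‖v‖ ^ 2
  have hu : ‖u‖ = 1 - a := norm_smul_of_norm_eq_one hp (by linarith)
  have hB : 0 < B := by have := norm_nonneg v; nlinarith
  have hx : x ^ 2 < 2 * sinh (r / 2) ^ 2 * a * B := by
    have h := sq_norm_sub_lt_of_distH_lt (hu ▸ (by linarith : 1 - a < 1)) hv1 hvr
    rw [hu] at h
    have : 0 ≤ sinh (r / 2) ^ 2 * a ^ 2 * B := by positivity
    nlinarith
  have ha_le : a ≤ x + B := by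
    have hvu : ‖v‖ ≤ ‖u‖ + x := norm_le_norm_add_norm_sub u v
    have : 0 ≤ ‖v‖ * (1 - ‖v‖) := mul_nonneg (norm_nonneg v) (by linarith)
    nlinarith
  have hvp : ‖v - p‖ ≤ x + a := by
    calc ‖v - p‖ ≤ ‖v - u‖ + ‖u - p‖ := norm_sub_le_norm_sub_add_norm_sub v u p
      _ = x + a := by
        rw [norm_sub_rev, show u - p = -(a • p) by simp only [u]; module, norm_neg,
          norm_smul_of_norm_eq_one hp ha.le]
  have ha_sq : a ^ 2 ≤ x ^ 2 + 2 * a * B := by nlinarith [sq_nonneg (x - a)]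
  calc ‖v - p‖ ^ 2 ≤ (x + a) ^ 2 := pow_le_pow_left₀ (norm_nonneg _) hvp 2
    _ ≤ 2 * x ^ 2 + 2 * a ^ 2 := by nlinarith [sq_nonneg (x - a)]
    _ < _ := by nlinarith

theorem exists_ballH_subset_ball_smul {p : EuclideanSpace ℝ (Fin 2)} (hp : ‖p‖ = 1) {ρ : ℝ}
    (hρ : 0 < ρ) (r : ℝ) : ∃ u : EuclideanSpace ℝ (Fin 2), ‖u‖ < 1 ∧
      ballH u r ⊆ ball ((1 - ρ) • p) ρ := by
  set C := 8 * sinh (r / 2) ^ 2 + 4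
  have hC : 0 < C := by positivity
  set a := min 1 (ρ / C)
  have ha : 0 < a := lt_min one_pos (by positivity)
  have haC : C * a ≤ ρ := by
    rw [mul_comm, ← le_div_iff₀ hC]; exact min_le_right _ _
  refine ⟨(1 - a) • p, ?_, fun v hv ↦ ?_⟩
  · rw [norm_smul_of_norm_eq_one hp (by linarith [min_le_left 1 (ρ / C)])]
    linarith
  have hvp := sq_norm_sub_lt_of_mem_ballH hp ha (min_le_left _ _) hv
  have hB : 0 < 1 - ‖v‖ ^ 2 := by have := norm_nonneg v; nlinarith [hv.1]
  rw [mem_ball_smul_iff hp hρ.le]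
  nlinarith [sq_nonneg ‖v - p‖]

theorem stmt4 (c : EuclideanSpace ℝ (Fin 2)) (ρ : ℝ) (hρ : 0 < ρ)
    (h : (Metric.ball c ρ ⊆ Metric.ball (0 : EuclideanSpace ℝ (Fin 2)) 1 ∧
            ∃! p : EuclideanSpace ℝ (Fin 2), p ∈ closure (Metric.ball c ρ) ∧ ‖p‖ = 1) ∨
         ((Metric.ball c ρ ∩ Metric.ball (0 : EuclideanSpace ℝ (Fin 2)) 1).Nonempty ∧
            ¬ Metric.ball c ρ ⊆ Metric.closedBall (0 : EuclideanSpace ℝ (Fin 2)) 1)) :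
    ∀ r : ℝ, 0 < r → ∃ u : EuclideanSpace ℝ (Fin 2), ‖u‖ < 1 ∧
      ballH u r ⊆ Metric.ball c ρ := by
  intro r _
  obtain ⟨p, hp, s, hs, hsub⟩ : ∃ p : EuclideanSpace ℝ (Fin 2), ‖p‖ = 1 ∧
      ∃ s > 0, ball ((1 - s) • p) s ⊆ ball c ρ := by
    rcases h with ⟨hsub, p, ⟨hpc, hp⟩, -⟩ | ⟨hin, hout⟩
    · exact ⟨p, hp, ρ, hρ, by rw [eq_smul_of_ball_subset_ball hρ hp hpc hsub]⟩
    · obtain ⟨p, hpc, hp⟩ := exists_norm_eq_one_mem_ball hin hout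
      exact ⟨p, hp, exists_ball_smul_subset_ball hp hpc⟩
  obtain ⟨u, hu, hball⟩ := exists_ballH_subset_ball_smul hp hs r
  exact ⟨u, hu, hball.trans hsub⟩
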